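/- arXiv:2311.03109 — 3 statements merged into one kernel-verified Lean document; each statement's English description precedes it below -/
import Mathlib

section
/- Every tensor A ∈ ℝ^{I_1×…×I_N×J_1×…×J_M} (with M ≤ N) admits an Einstein-product singular value decomposition A = U *_N S *_M V^T, where U ∈ ℝ^{I_1×…×I_N×I_1×…×I_N} and V ∈ ℝ^{J_1×…×J_M×J_1×…×J_M} are orthogonal with respect to the Einstein product (U^T *_N U = I_N, V^T *_M V = I_M) and S ∈ ℝ^{I_1×…×I_N×J_1×…×J_M} is a diagonal tensor with nonnegative diagonal entries. -/
/-!
Over flattened multi-indices the Einstein product is the matrix product, so this is the real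
singular value decomposition. Diagonalising `Aᵀ * A` by an orthogonal `V` makes the columns of
`A * V` pairwise orthogonal. Their normalisations, placed at the positions `pad j`, extend to an
orthonormal basis; its matrix `U` satisfies `A * V = U * S`, where `S (pad j) j` is the norm of
the `j`-th column of `A * V`.
-/

/-- The Einstein product. -/
def eprod {ι κ μ : Type*} [Fintype κ] (A : ι → κ → ℝ) (B : κ → μ → ℝ) : ι → μ → ℝ :=
  fun i m => ∑ k, A i k * B k m

/-- The transpose of a tensor. -/
def ttrans {ι κ : Type*} (A : ι → κ → ℝ) : κ → ι → ℝ := fun k i => A i k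

/-- The identity tensor. -/
def eid {ι : Type*} [DecidableEq ι] : ι → ι → ℝ := fun i j => if i = j then 1 else 0

open Function Module

section InnerProductSpace

variable {𝕜 E ι κ : Type*} [RCLike 𝕜] [NormedAddCommGroup E] [InnerProductSpace 𝕜 E]

theorem orthonormal_inv_norm_smul_of_pairwise_inner_eq_zero {w : ι → E}
    (hw : Pairwise fun i i' => inner 𝕜 (w i) (w i') = 0) :
    Orthonormal 𝕜 fun i : {i // w i ≠ 0} => (‖w i‖⁻¹ : 𝕜) • w i := by
  refine ⟨fun i => norm_smul_inv_norm i.2, fun i i' hii' => ?_⟩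
  change inner 𝕜 _ _ = 0
  rw [inner_smul_left, inner_smul_right, hw (Subtype.coe_injective.ne hii'), mul_zero, mul_zero]

theorem Pairwise.extend_inner_eq_zero {w : κ → E} {f : κ → ι} (hf : Injective f)
    (hw : Pairwise fun j j' => inner 𝕜 (w j) (w j') = 0) :
    Pairwise fun i i' => inner 𝕜 (extend f w 0 i) (extend f w 0 i') = 0 := by
  intro i i' hii'
  by_cases hi : ∃ j, f j = i
  · by_cases hi' : ∃ j, f j = i'
    · obtain ⟨j, rfl⟩ := hi
      obtain ⟨j', rfl⟩ := hi'
      rw [hf.extend_apply, hf.extend_apply, hw fun h => hii' (congrArg f h)]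
    · rw [extend_apply' _ _ _ hi', Pi.zero_apply, inner_zero_right]
  · rw [extend_apply' _ _ _ hi, Pi.zero_apply, inner_zero_left]

variable [FiniteDimensional 𝕜 E] [Fintype ι]

theorem exists_orthonormalBasis_forall_eq_norm_smul {w : ι → E}
    (hcard : finrank 𝕜 E = Fintype.card ι) (hw : Pairwise fun i i' => inner 𝕜 (w i) (w i') = 0) :
    ∃ b : OrthonormalBasis ι 𝕜 E, ∀ i, w i = (‖w i‖ : 𝕜) • b i := by
  obtain ⟨b, hb⟩ := Orthonormal.exists_orthonormalBasis_extension_of_card_eq hcard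
    (v := fun i => (‖w i‖⁻¹ : 𝕜) • w i) (s := {i | w i ≠ 0})
    (orthonormal_inv_norm_smul_of_pairwise_inner_eq_zero hw)
  refine ⟨b, fun i => ?_⟩
  by_cases hi : w i = 0
  · simp [hi]
  · rw [hb i hi, smul_inv_smul₀ (by exact_mod_cast norm_ne_zero_iff.mpr hi)]

end InnerProductSpace

namespace Matrix

variable {m n : Type*} [Fintype m]

theorem exists_mem_orthogonalGroup_hasOrthogonalCols_mul [Fintype n] [DecidableEq n]
    (A : Matrix m n ℝ) :
    ∃ V ∈ orthogonalGroup n ℝ, (A * V).HasOrthogonalCols := by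
  have hH : (Aᵀ * A).IsHermitian := by
    simpa only [conjTranspose_eq_transpose_of_trivial] using isHermitian_conjTranspose_mul_self A
  refine ⟨hH.eigenvectorUnitary, hH.eigenvectorUnitary.2, ?_⟩
  rw [← transpose_mul_self_isDiag_iff_hasOrthogonalCols]
  have hdiag := hH.conjStarAlgAut_star_eigenvectorUnitary
  rw [Unitary.conjStarAlgAut_star_apply, star_eq_conjTranspose,
    conjTranspose_eq_transpose_of_trivial] at hdiag
  rw [transpose_mul, Matrix.mul_assoc, ← Matrix.mul_assoc Aᵀ, ← Matrix.mul_assoc, hdiag]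
  exact isDiag_diagonal _

theorem exists_mem_orthogonalGroup_mul_eq_of_hasOrthogonalCols [DecidableEq m] {W : Matrix m n ℝ}
    (hW : W.HasOrthogonalCols) {pad : n → m} (hpad : Injective pad) :
    ∃ U ∈ orthogonalGroup m ℝ, ∃ S : Matrix m n ℝ,
      (∀ i j, i ≠ pad j → S i j = 0) ∧ (∀ j, 0 ≤ S (pad j) j) ∧ W = U * S := by
  have hcols : Pairwise fun j j' =>
      inner ℝ (WithLp.toLp 2 (fun x => W x j) : EuclideanSpace ℝ m)
        (WithLp.toLp 2 fun x => W x j') = 0 :=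
    fun j j' hjj' => by
      dsimp only
      rw [EuclideanSpace.inner_toLp_toLp, star_trivial, dotProduct_comm]
      exact hW hjj'
  obtain ⟨b, hb⟩ := exists_orthonormalBasis_forall_eq_norm_smul (finrank_euclideanSpace (𝕜 := ℝ))
    (hcols.extend_inner_eq_zero hpad)
  refine ⟨(EuclideanSpace.basisFun m ℝ).toBasis.toMatrix b,
    (EuclideanSpace.basisFun m ℝ).toMatrix_orthonormalBasis_mem_orthogonal b,
    of fun i j => if i = pad j then ‖(WithLp.toLp 2 fun x => W x j : EuclideanSpace ℝ m)‖ else 0,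
    fun i j hij => if_neg hij, fun j => by simp, ?_⟩
  ext x j
  have hbj := congrArg (· x) (hb (pad j))
  simp only [hpad.extend_apply, PiLp.smul_apply, smul_eq_mul] at hbj
  simp [mul_apply, Basis.toMatrix_apply, hbj, mul_comm]

theorem exists_svd [DecidableEq m] [Fintype n] [DecidableEq n] (A : Matrix m n ℝ) {pad : n → m}
    (hpad : Injective pad) :
    ∃ U ∈ orthogonalGroup m ℝ, ∃ S : Matrix m n ℝ, ∃ V ∈ orthogonalGroup n ℝ,
      (∀ i j, i ≠ pad j → S i j = 0) ∧ (∀ j, 0 ≤ S (pad j) j) ∧ A = U * S * Vᵀ := by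
  obtain ⟨V, hV, hAV⟩ := exists_mem_orthogonalGroup_hasOrthogonalCols_mul A
  obtain ⟨U, hU, S, hS, hS_nonneg, hAVUS⟩ :=
    exists_mem_orthogonalGroup_mul_eq_of_hasOrthogonalCols hAV hpad
  refine ⟨U, hU, S, V, hV, hS, hS_nonneg, ?_⟩
  rw [← hAVUS, Matrix.mul_assoc, (mem_orthogonalGroup_iff n ℝ).mp hV, Matrix.mul_one]

end Matrix

/-- `pad` realises `M ≤ N`: it sends `(j₁,…,j_M)` to `(j₁,…,j_M,1,…,1)`, and a diagonal `S` is one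
supported on the entries `(pad j, j)`. -/
theorem einstein_svd_exists {ι κ : Type*} [Fintype ι] [Fintype κ]
    [DecidableEq ι] [DecidableEq κ]
    (pad : κ → ι) (hpad : Function.Injective pad) (A : ι → κ → ℝ) :
    ∃ (U : ι → ι → ℝ) (S : ι → κ → ℝ) (V : κ → κ → ℝ),
      eprod (ttrans U) U = eid ∧
      eprod (ttrans V) V = eid ∧
      (∀ i j, i ≠ pad j → S i j = 0) ∧
      (∀ j, 0 ≤ S (pad j) j) ∧
      A = eprod (eprod U S) (ttrans V) := by
  obtain ⟨U, hU, S, V, hV, hS, hS_nonneg, hA⟩ := Matrix.exists_svd (Matrix.of A) hpad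
  -- `eprod`, `ttrans` and `eid` unfold to `*`, `ᵀ` and `1` on `Matrix`
  exact ⟨U, S, V, (Matrix.mem_orthogonalGroup_iff' ι ℝ).mp hU,
    (Matrix.mem_orthogonalGroup_iff' κ ℝ).mp hV, hS, hS_nonneg, hA⟩
end

section
/- Let A ∈ ℝ^{I_1×…×I_N×J_1×…×J_M} with Einstein SVD A = U *_N S *_M V^T. Then A can be written as a sum of rank-one terms: A = Σ_{i_1,…,i_M} μ_{i_1…i_M} · U_{i_1…i_M} ∘ V_{i_1…i_M}, where the sum runs over i_k = 1,…,min(I_k,J_k), μ_{i_1…i_M} are the singular values, U_{i_1…i_M} ∈ ℝ^{I_1×…×I_N} and V_{i_1…i_M} ∈ ℝ^{J_1×…×J_M} are the corresponding slices of U and V, and ∘ denotes the outer product. -/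
/-- The outer product `(X ∘ Y)_{αβ} = X_α Y_β`. -/
def touter {ι κ : Type*} (X : ι → ℝ) (Y : κ → ℝ) : ι → κ → ℝ := fun i k => X i * Y k

theorem eprod_eprod_ttrans_eq_sum_touter {ι α β κ : Type*} [Fintype α] [Fintype β]
    (U : ι → α → ℝ) (S : α → β → ℝ) (V : κ → β → ℝ) :
    eprod (eprod U S) (ttrans V) =
      ∑ a, ∑ b, S a b • touter (fun i => U i a) (fun k => V k b) := by
  funext i k
  simp only [eprod, ttrans, touter, Finset.sum_apply, Pi.smul_apply, smul_eq_mul,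
    Finset.sum_mul]
  rw [Finset.sum_comm]
  exact Finset.sum_congr rfl fun a _ => Finset.sum_congr rfl fun b _ => by ring

theorem einstein_svd_rank_one_sum_general {ι κ : Type*} [Fintype ι] [Fintype κ]
    (pad : κ → ι)
    (A : ι → κ → ℝ) (U : ι → ι → ℝ) (S : ι → κ → ℝ) (V : κ → κ → ℝ)
    (hS : ∀ i j, i ≠ pad j → S i j = 0)
    (hA : A = eprod (eprod U S) (ttrans V)) :
    A = ∑ j : κ, S (pad j) j • touter (fun i => U i (pad j)) (fun k => V k j) := by
  rw [hA, eprod_eprod_ttrans_eq_sum_touter, Finset.sum_comm]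
  refine Finset.sum_congr rfl fun j _ => Fintype.sum_eq_single (pad j) fun i hi => ?_
  rw [hS i j hi, zero_smul]

/-- If `A = U *_N S *_M V^T` is an Einstein SVD with `S` diagonal (supported on the
padded diagonal given by the injective `pad : κ → ι`, with singular values
`μ_{i₁…i_M} = S (pad j) j`), then `A` is the sum of the rank-one terms
`μ_{i₁…i_M} · U_{i₁…i_M} ∘ V_{i₁…i_M}`, where `U_{i₁…i_M}` and `V_{i₁…i_M}` are the
corresponding slices of `U` and `V`. -/
theorem einstein_svd_rank_one_sum {ι κ : Type*} [Fintype ι] [Fintype κ]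
    (pad : κ → ι) (hpad : Function.Injective pad)
    (A : ι → κ → ℝ) (U : ι → ι → ℝ) (S : ι → κ → ℝ) (V : κ → κ → ℝ)
    (hS : ∀ i j, i ≠ pad j → S i j = 0)
    (hA : A = eprod (eprod U S) (ttrans V)) :
    A = ∑ j : κ, S (pad j) j • touter (fun i => U i (pad j)) (fun k => V k j) :=
  einstein_svd_rank_one_sum_general pad A U S V hS hA
end

section
/- Suppose the Einstein tensor Lanczos bidiagonalization relations hold after m steps: A *_M ℙ_m = ℚ_m ×_{N+1} B_m^T and A^T *_N ℚ_m = ℙ_m ×_{M+1} B_m + R_m ∘ e_m, where ℙ_m has orthonormal slices P_1,…,P_m, ℚ_m has orthonormal slices Q_1,…,Q_m, B_m is the m×m upper bidiagonal matrix with diagonal α_1,…,α_m and superdiagonal β_1,…,β_{m-1}. If (s, u, v) is a singular triplet of B_m (B_m v = s u, B_m^T u = s v), then the tensors Ṽ = ℙ_m ×_{M+1} v^T and Ũ = ℚ_m ×_{N+1} u^T satisfy A *_M Ṽ = s Ũ and A^T *_N Ũ = s Ṽ + (R_m ∘ e_m) ×_{M+1} u^T. -/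
/-- Slice-wise application of `A` to a tensor with an extra last mode (`A *_M ℙ_m`). -/
def eprodSlices {ι κ : Type*} {m : ℕ} [Fintype κ] (A : ι → κ → ℝ) (P : κ → Fin m → ℝ) :
    ι → Fin m → ℝ := fun i j => ∑ k, A i k * P k j

/-- The `(M+1)`-mode product of `ℙ` with a matrix `B`. -/
def modeLast {κ : Type*} {m : ℕ} (P : κ → Fin m → ℝ) (B : Matrix (Fin m) (Fin m) ℝ) :
    κ → Fin m → ℝ := fun x i => ∑ k, P x k * B i k

/-- Contraction of the last mode of `ℙ` against a vector `u` (i.e. `ℙ ×_{M+1} u^T`). -/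
def modeVec {κ : Type*} {m : ℕ} (P : κ → Fin m → ℝ) (u : Fin m → ℝ) : κ → ℝ :=
  fun x => ∑ k, u k * P x k

/-- Application of `A ∈ ℝ^{I×J}` to `V ∈ ℝ^{J}` (`A *_M V`). -/
def applyT {ι κ : Type*} [Fintype κ] (A : ι → κ → ℝ) (V : κ → ℝ) : ι → ℝ :=
  fun i => ∑ k, A i k * V k

/-- The outer product `R ∘ e` of `R ∈ ℝ^{J₁×…×J_M}` with a vector `e ∈ ℝ^m`. -/
def outerLast {κ : Type*} {m : ℕ} (R : κ → ℝ) (e : Fin m → ℝ) : κ → Fin m → ℝ :=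
  fun x j => R x * e j

/-- The Frobenius inner product of same-size tensors. -/
def tinner {κ : Type*} [Fintype κ] (X Y : κ → ℝ) : ℝ := ∑ x, X x * Y x

/-! The statement is linear algebra in the last mode: contracting the last mode against a vector
commutes with applying `A`, and contracting `ℙ ×_{M+1} B` against `w` is contracting `ℙ` against
`Bᵀ w`. Substituting the two Lanczos relations and the singular-triplet equations then gives both
identities. -/

section ModeVec

variable {ι κ : Type*} {m : ℕ}

lemma applyT_modeVec [Fintype κ] (C : ι → κ → ℝ) (T : κ → Fin m → ℝ) (w : Fin m → ℝ) :
    applyT C (modeVec T w) = modeVec (eprodSlices C T) w := by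
  funext i
  simp only [applyT, modeVec, eprodSlices, Finset.mul_sum]
  rw [Finset.sum_comm]
  exact Finset.sum_congr rfl fun _ _ => Finset.sum_congr rfl fun _ _ => by ring

lemma modeVec_modeLast (T : κ → Fin m → ℝ) (B : Matrix (Fin m) (Fin m) ℝ) (w : Fin m → ℝ) :
    modeVec (modeLast T B) w = modeVec T (B.transpose.mulVec w) := by
  funext x
  simp only [modeVec, modeLast, Matrix.mulVec, dotProduct, Matrix.transpose_apply,
    Finset.mul_sum, Finset.sum_mul]
  rw [Finset.sum_comm]
  exact Finset.sum_congr rfl fun _ _ => Finset.sum_congr rfl fun _ _ => by ring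

lemma modeVec_add_left (T T' : κ → Fin m → ℝ) (w : Fin m → ℝ) :
    modeVec (T + T') w = modeVec T w + modeVec T' w := by
  funext x
  simp only [modeVec, Pi.add_apply, mul_add, Finset.sum_add_distrib]

lemma modeVec_smul_right (T : κ → Fin m → ℝ) (c : ℝ) (w : Fin m → ℝ) :
    modeVec T (c • w) = c • modeVec T w := by
  funext x
  simp only [modeVec, Pi.smul_apply, smul_eq_mul, Finset.mul_sum, mul_assoc]

end ModeVec

theorem lanczos_singular_triplet_general {ι κ : Type*} [Fintype ι] [Fintype κ] {m : ℕ}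
    (A : ι → κ → ℝ) (P : κ → Fin (m + 1) → ℝ) (Q : ι → Fin (m + 1) → ℝ)
    (B : Matrix (Fin (m + 1)) (Fin (m + 1)) ℝ) (R : κ → ℝ)
    (h₁ : eprodSlices A P = modeLast Q B.transpose)
    (h₂ : eprodSlices (ttrans A) Q =
      modeLast P B + outerLast R (Pi.single (Fin.last m) 1))
    (s : ℝ) (u v : Fin (m + 1) → ℝ)
    (hv : B.mulVec v = s • u) (hu : B.transpose.mulVec u = s • v) :
    applyT A (modeVec P v) = s • modeVec Q u ∧
    applyT (ttrans A) (modeVec Q u) =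
      s • modeVec P v + modeVec (outerLast R (Pi.single (Fin.last m) 1)) u := by
  constructor
  · rw [applyT_modeVec, h₁, modeVec_modeLast, Matrix.transpose_transpose, hv,
      modeVec_smul_right]
  · rw [applyT_modeVec, h₂, modeVec_add_left, modeVec_modeLast, hu, modeVec_smul_right]

/-- If, after `m` steps, the Einstein tensor Lanczos bidiagonalization relations
`A *_M ℙ_m = ℚ_m ×_{N+1} B_m^T` and `A^T *_N ℚ_m = ℙ_m ×_{M+1} B_m + R_m ∘ e_m` hold,
with `ℙ_m, ℚ_m` having orthonormal slices and `B_m` upper bidiagonal, and `(s, u, v)`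
is a singular triplet of `B_m`, then `Ṽ = ℙ_m ×_{M+1} v^T` and `Ũ = ℚ_m ×_{N+1} u^T`
satisfy `A *_M Ṽ = s Ũ` and `A^T *_N Ũ = s Ṽ + (R_m ∘ e_m) ×_{M+1} u^T`. -/
theorem lanczos_singular_triplet {ι κ : Type*} [Fintype ι] [Fintype κ] {m : ℕ}
    (A : ι → κ → ℝ) (P : κ → Fin (m + 1) → ℝ) (Q : ι → Fin (m + 1) → ℝ)
    (B : Matrix (Fin (m + 1)) (Fin (m + 1)) ℝ) (R : κ → ℝ)
    (hP : ∀ i j, tinner (fun x => P x i) (fun x => P x j) = if i = j then 1 else 0)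
    (hQ : ∀ i j, tinner (fun x => Q x i) (fun x => Q x j) = if i = j then 1 else 0)
    (hBd : ∀ i j : Fin (m + 1), (j : ℕ) ≠ (i : ℕ) → (j : ℕ) ≠ (i : ℕ) + 1 → B i j = 0)
    (h₁ : eprodSlices A P = modeLast Q B.transpose)
    (h₂ : eprodSlices (ttrans A) Q =
      modeLast P B + outerLast R (Pi.single (Fin.last m) 1))
    (s : ℝ) (u v : Fin (m + 1) → ℝ)
    (hv : B.mulVec v = s • u) (hu : B.transpose.mulVec u = s • v) :
    applyT A (modeVec P v) = s • modeVec Q u ∧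
    applyT (ttrans A) (modeVec Q u) =
      s • modeVec P v + modeVec (outerLast R (Pi.single (Fin.last m) 1)) u :=
  lanczos_singular_triplet_general A P Q B R h₁ h₂ s u v hv hu
end
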